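/- arXiv:1508.04848 — 7 statements merged into one kernel-verified Lean document; each statement's English description precedes it below -/
import Mathlib

section
/- The product operation on constraint automata is associative up to isomorphism: for any three constraint automata A1, A2, A3, the product (A1 ⋈ A2) ⋈ A3 is isomorphic (via reassociation of state tuples) to A1 ⋈ (A2 ⋈ A3), with transitions identical up to logical equivalence of data constraints. -/
/-- A constraint automaton over state space `Q`, nodes `N`, and data domain `D`.
    Data constraints are represented semantically, as predicates on (partial)
    data assignments `N → Option D` (where `none` means no data flow at a node);
    logical equivalence of data constraints is pointwise `Iff`. -/
structure CA (Q N D : Type) where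
  nodes : Set N
  init : Q
  tr : Q → Set N → ((N → Option D) → Prop) → Q → Prop

/-- Product `A1 ⋈ A2` of constraint automata: rule (1) synchronizes transitions
    agreeing on shared nodes (label `N1 ∪ N2`, guard `g1 ∧ g2`); rule (2) lets one
    automaton fire alone (with `Nj = ∅`, `gj = ⊤`) when its label is disjoint from
    the other's node set, the other staying put. -/
def caProd {Q1 Q2 N D : Type} (A1 : CA Q1 N D) (A2 : CA Q2 N D) :
    CA (Q1 × Q2) N D where
  nodes := A1.nodes ∪ A2.nodes
  init := (A1.init, A2.init)
  tr := fun q M g q' =>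
    (∃ M1 M2 g1 g2, A1.tr q.1 M1 g1 q'.1 ∧ A2.tr q.2 M2 g2 q'.2 ∧
      M1 ∩ A2.nodes = M2 ∩ A1.nodes ∧ M = M1 ∪ M2 ∧
      g = fun δ => g1 δ ∧ g2 δ) ∨
    (∃ g1, A1.tr q.1 M g1 q'.1 ∧ q'.2 = q.2 ∧ M ∩ A2.nodes = ∅ ∧
      g = fun δ => g1 δ ∧ True) ∨
    (∃ g2, A2.tr q.2 M g2 q'.2 ∧ q'.1 = q.1 ∧ M ∩ A1.nodes = ∅ ∧
      g = fun δ => True ∧ g2 δ)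

/-- Existential quantification of a data constraint over the nodes in `P`
    (the semantics of `∃ d_{p1} ⋯ ∃ d_{pn} (g)`). -/
def hideG {N D : Type} (P : Set N) (g : (N → Option D) → Prop) :
    (N → Option D) → Prop :=
  fun δ => ∃ δ', (∀ n, n ∉ P → δ' n = δ n) ∧ g δ'

/-- Hiding the nodes `P` in a constraint automaton. -/
def caHide {Q N D : Type} (P : Set N) (A : CA Q N D) : CA Q N D where
  nodes := A.nodes \ P
  init := A.init
  tr := fun q M' g' q' => ∃ M g, A.tr q M g q' ∧ M' = M \ P ∧ g' = hideG P g

/-! Let a component that does not take part in a transition make an *idle* step (no nodes,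
guard `⊤`, same state). The interleaving rule is then the synchronization rule with one side
idle, so a transition of `A1 ⋈ A2` is a pair of steps of `A1` and `A2`, not both idle, that agree
on their shared nodes. Unfolding either bracketing of a triple product therefore gives the
same thing: three steps, not all idle, that agree pairwise on shared nodes, with label
`M1 ∪ M2 ∪ M3` and guard `g1 ⊓ g2 ⊓ g3`. Logically equivalent guards are equal by `propext`. -/

namespace Set

variable {α : Type*}

theorem inter_agree_union_left_iff (M1 M2 M3 N1 N2 N3 : Set α) :
    (M1 ∩ N2 = M2 ∩ N1 ∧ (M1 ∪ M2) ∩ N3 = M3 ∩ (N1 ∪ N2)) ↔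
      (M1 ∩ N2 = M2 ∩ N1 ∧ M1 ∩ N3 = M3 ∩ N1 ∧ M2 ∩ N3 = M3 ∩ N2) := by
  simp only [Set.ext_iff, mem_inter_iff, mem_union, ← forall_and]
  exact forall_congr' fun _ => by tauto

theorem inter_agree_union_right_iff (M1 M2 M3 N1 N2 N3 : Set α) :
    (M2 ∩ N3 = M3 ∩ N2 ∧ M1 ∩ (N2 ∪ N3) = (M2 ∪ M3) ∩ N1) ↔
      (M1 ∩ N2 = M2 ∩ N1 ∧ M1 ∩ N3 = M3 ∩ N1 ∧ M2 ∩ N3 = M3 ∩ N2) := by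
  simp only [Set.ext_iff, mem_inter_iff, mem_union, ← forall_and]
  exact forall_congr' fun _ => by tauto

end Set

def CA.step {Q N D : Type} (A : CA Q N D) :
    Bool → Q → Set N → ((N → Option D) → Prop) → Q → Prop
  | true, q, M, g, q' => A.tr q M g q'
  | false, q, M, g, q' => M = ∅ ∧ g = ⊤ ∧ q' = q

section

open Set

variable {Q1 Q2 Q3 N D : Type}

theorem caProd_step_iff (A1 : CA Q1 N D) (A2 : CA Q2 N D) (b : Bool) (q q' : Q1 × Q2)
    (M : Set N) (g : (N → Option D) → Prop) :
    (caProd A1 A2).step b q M g q' ↔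
      ∃ b1 b2 M1 M2 g1 g2, b = (b1 || b2) ∧ A1.step b1 q.1 M1 g1 q'.1 ∧
        A2.step b2 q.2 M2 g2 q'.2 ∧ M1 ∩ A2.nodes = M2 ∩ A1.nodes ∧ M = M1 ∪ M2 ∧
        g = g1 ⊓ g2 := by
  cases b
  · constructor
    · rintro ⟨rfl, rfl, rfl⟩
      exact ⟨false, false, ∅, ∅, ⊤, ⊤, rfl, ⟨rfl, rfl, rfl⟩, ⟨rfl, rfl, rfl⟩,
        by simp only [empty_inter], (union_empty _).symm, inf_top_eq _ |>.symm⟩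
    · rintro ⟨b1, b2, M1, M2, g1, g2, hb, h1, h2, -, rfl, rfl⟩
      obtain ⟨rfl, rfl⟩ := Bool.or_eq_false_iff.1 hb.symm
      obtain ⟨rfl, rfl, hq1⟩ := h1
      obtain ⟨rfl, rfl, hq2⟩ := h2
      exact ⟨union_empty _, inf_top_eq _, Prod.ext hq1 hq2⟩
  · constructor
    · rintro (⟨M1, M2, g1, g2, h1, h2, hM, rfl, rfl⟩ | ⟨g1, h1, hq, hM, rfl⟩ |
        ⟨g2, h2, hq, hM, rfl⟩)
      · exact ⟨true, true, M1, M2, g1, g2, rfl, h1, h2, hM, rfl, rfl⟩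
      · exact ⟨true, false, M, ∅, g1, ⊤, rfl, h1, ⟨rfl, rfl, hq⟩,
          hM.trans (empty_inter _).symm, (union_empty _).symm, rfl⟩
      · exact ⟨false, true, ∅, M, ⊤, g2, rfl, ⟨rfl, rfl, hq⟩, h2,
          (empty_inter _).trans hM.symm, (empty_union _).symm, rfl⟩
    · rintro ⟨_ | _, _ | _, M1, M2, g1, g2, hb, h1, h2, hM, rfl, rfl⟩
      · cases hb
      · obtain ⟨rfl, rfl, hq⟩ := h1
        rw [empty_union]
        exact Or.inr (Or.inr ⟨g2, h2, hq, hM.symm.trans (empty_inter _), rfl⟩)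
      · obtain ⟨rfl, rfl, hq⟩ := h2
        rw [union_empty]
        exact Or.inr (Or.inl ⟨g1, h1, hq, hM.trans (empty_inter _), rfl⟩)
      · exact Or.inl ⟨M1, M2, g1, g2, h1, h2, hM, rfl, rfl⟩

theorem caProd_caProd_left_step_iff (A1 : CA Q1 N D) (A2 : CA Q2 N D) (A3 : CA Q3 N D)
    (b : Bool) (q1 q1' : Q1) (q2 q2' : Q2) (q3 q3' : Q3) (M : Set N)
    (g : (N → Option D) → Prop) :
    (caProd (caProd A1 A2) A3).step b ((q1, q2), q3) M g ((q1', q2'), q3') ↔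
      ∃ b1 b2 b3 M1 M2 M3 g1 g2 g3, b = (b1 || b2 || b3) ∧ A1.step b1 q1 M1 g1 q1' ∧
        A2.step b2 q2 M2 g2 q2' ∧ A3.step b3 q3 M3 g3 q3' ∧
        (M1 ∩ A2.nodes = M2 ∩ A1.nodes ∧ M1 ∩ A3.nodes = M3 ∩ A1.nodes ∧
          M2 ∩ A3.nodes = M3 ∩ A2.nodes) ∧
        M = M1 ∪ M2 ∪ M3 ∧ g = g1 ⊓ g2 ⊓ g3 := by
  simp only [caProd_step_iff]
  constructor
  · rintro ⟨_, b3, _, M3, _, g3, rfl,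
      ⟨b1, b2, M1, M2, g1, g2, rfl, h1, h2, h12, rfl, rfl⟩, h3, h123, rfl, rfl⟩
    exact ⟨b1, b2, b3, M1, M2, M3, g1, g2, g3, rfl, h1, h2, h3,
      (inter_agree_union_left_iff ..).1 ⟨h12, h123⟩, rfl, rfl⟩
  · rintro ⟨b1, b2, b3, M1, M2, M3, g1, g2, g3, rfl, h1, h2, h3, hM, rfl, rfl⟩
    obtain ⟨h12, h123⟩ := (inter_agree_union_left_iff ..).2 hM
    exact ⟨b1 || b2, b3, M1 ∪ M2, M3, g1 ⊓ g2, g3, rfl,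
      ⟨b1, b2, M1, M2, g1, g2, rfl, h1, h2, h12, rfl, rfl⟩, h3, h123, rfl, rfl⟩

theorem caProd_caProd_right_step_iff (A1 : CA Q1 N D) (A2 : CA Q2 N D) (A3 : CA Q3 N D)
    (b : Bool) (q1 q1' : Q1) (q2 q2' : Q2) (q3 q3' : Q3) (M : Set N)
    (g : (N → Option D) → Prop) :
    (caProd A1 (caProd A2 A3)).step b (q1, (q2, q3)) M g (q1', (q2', q3')) ↔
      ∃ b1 b2 b3 M1 M2 M3 g1 g2 g3, b = (b1 || b2 || b3) ∧ A1.step b1 q1 M1 g1 q1' ∧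
        A2.step b2 q2 M2 g2 q2' ∧ A3.step b3 q3 M3 g3 q3' ∧
        (M1 ∩ A2.nodes = M2 ∩ A1.nodes ∧ M1 ∩ A3.nodes = M3 ∩ A1.nodes ∧
          M2 ∩ A3.nodes = M3 ∩ A2.nodes) ∧
        M = M1 ∪ M2 ∪ M3 ∧ g = g1 ⊓ g2 ⊓ g3 := by
  simp only [caProd_step_iff]
  constructor
  · rintro ⟨b1, _, M1, _, g1, _, rfl, h1,
      ⟨b2, b3, M2, M3, g2, g3, rfl, h2, h3, h23, rfl, rfl⟩, h123, rfl, rfl⟩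
    exact ⟨b1, b2, b3, M1, M2, M3, g1, g2, g3, (Bool.or_assoc ..).symm, h1, h2, h3,
      (inter_agree_union_right_iff ..).1 ⟨h23, h123⟩, (union_assoc ..).symm,
      (inf_assoc ..).symm⟩
  · rintro ⟨b1, b2, b3, M1, M2, M3, g1, g2, g3, rfl, h1, h2, h3, hM, rfl, rfl⟩
    obtain ⟨h23, h123⟩ := (inter_agree_union_right_iff ..).2 hM
    exact ⟨b1, b2 || b3, M1, M2 ∪ M3, g1, g2 ⊓ g3, Bool.or_assoc .., h1,
      ⟨b2, b3, M2, M3, g2, g3, rfl, h2, h3, h23, rfl, rfl⟩, h123,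
      union_assoc .., inf_assoc ..⟩

end

/-- the product of constraint automata is associative up to the
    isomorphism reassociating state tuples, with transitions identical up to
    logical equivalence of data constraints. -/
theorem caProd_assoc {Q1 Q2 Q3 N D : Type}
    (A1 : CA Q1 N D) (A2 : CA Q2 N D) (A3 : CA Q3 N D) :
    (caProd (caProd A1 A2) A3).nodes = (caProd A1 (caProd A2 A3)).nodes ∧
    (caProd A1 (caProd A2 A3)).init =
      ((caProd (caProd A1 A2) A3).init.1.1,
        ((caProd (caProd A1 A2) A3).init.1.2, (caProd (caProd A1 A2) A3).init.2)) ∧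
    (∀ (q1 q1' : Q1) (q2 q2' : Q2) (q3 q3' : Q3) (M : Set N)
        (g : (N → Option D) → Prop),
      (caProd (caProd A1 A2) A3).tr ((q1, q2), q3) M g ((q1', q2'), q3') ↔
        ∃ g', (∀ δ, g δ ↔ g' δ) ∧
          (caProd A1 (caProd A2 A3)).tr (q1, (q2, q3)) M g' (q1', (q2', q3'))) := by
  refine ⟨Set.union_assoc _ _ _, rfl, fun q1 q1' q2 q2' q3 q3' M g => ?_⟩
  have hstep := (caProd_caProd_left_step_iff A1 A2 A3 true q1 q1' q2 q2' q3 q3' M g).trans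
    (caProd_caProd_right_step_iff A1 A2 A3 true q1 q1' q2 q2' q3 q3' M g).symm
  constructor
  · exact fun h => ⟨g, fun _ => Iff.rfl, hstep.1 h⟩
  · rintro ⟨g', hg, h⟩
    obtain rfl : g = g' := funext fun δ => propext (hg δ)
    exact hstep.2 h
end

section
/- Bisimilarity is a congruence with respect to the product of port automata: if A1 is bisimilar to A1' and A2 is bisimilar to A2' (where Ai and Ai' have the same node sets for i = 1, 2), then A1 ⋈ A2 is bisimilar to A1' ⋈ A2'. -/
/-- A labeled transition system with one initial state. -/
structure LTS (Λ : Type) : Type 1 where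
  Q : Type
  init : Q
  tr : Q → Λ → Q → Prop

/-- `R` is a bisimulation between `L1` and `L2` relating the initial states. -/
def IsBisim {Λ : Type} (L1 L2 : LTS Λ) (R : L1.Q → L2.Q → Prop) : Prop :=
  R L1.init L2.init ∧
  ∀ q1 q2, R q1 q2 →
    (∀ a q1', L1.tr q1 a q1' → ∃ q2', L2.tr q2 a q2' ∧ R q1' q2') ∧
    (∀ a q2', L2.tr q2 a q2' → ∃ q1', L1.tr q1 a q1' ∧ R q1' q2')

/-- Bisimilarity of labeled transition systems. -/
def Bisim {Λ : Type} (L1 L2 : LTS Λ) : Prop := ∃ R, IsBisim L1 L2 R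

/-- A port automaton over the node universe `N`
    (also used for (data-agnostic) BIP components). -/
structure PA (N : Type) : Type 1 where
  Q : Type
  init : Q
  nodes : Set N
  tr : Q → Set N → Q → Prop

/-- Interpretation of a port automaton as an LTS over the alphabet `2^N`. -/
def fa {N : Type} (A : PA N) : LTS (Set N) := ⟨A.Q, A.init, A.tr⟩

/-- Hiding a set `P` of nodes in a port automaton. -/
def PA.hide {N : Type} (P : Set N) (A : PA N) : PA N :=
  ⟨A.Q, A.init, A.nodes \ P, fun q M q' => ∃ M0, A.tr q M0 q' ∧ M = M0 \ P⟩

/-- Product of port automata: synchronization on shared nodes,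
    interleaving for transitions disjoint from the other automaton's nodes. -/
def paProd {N : Type} (A1 A2 : PA N) : PA N where
  Q := A1.Q × A2.Q
  init := (A1.init, A2.init)
  nodes := A1.nodes ∪ A2.nodes
  tr := fun q M q' =>
    (∃ M1 M2, A1.tr q.1 M1 q'.1 ∧ A2.tr q.2 M2 q'.2 ∧
      M1 ∩ A2.nodes = M2 ∩ A1.nodes ∧ M = M1 ∪ M2) ∨
    (A1.tr q.1 M q'.1 ∧ q'.2 = q.2 ∧ M ∩ A2.nodes = ∅) ∨
    (A2.tr q.2 M q'.2 ∧ q'.1 = q.1 ∧ M ∩ A1.nodes = ∅)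

/-- The class PA': ∅-labeled transitions exist exactly as self-loops. -/
def PAPrime {N : Type} (A : PA N) : Prop := ∀ q q', A.tr q ∅ q' ↔ q' = q

/-- Standard bisimilarity of port automata. -/
def PABisim {N : Type} (A1 A2 : PA N) : Prop :=
  ∃ R : A1.Q → A2.Q → Prop, R A1.init A2.init ∧
    ∀ q1 q2, R q1 q2 →
      (∀ M q1', A1.tr q1 M q1' → ∃ q2', A2.tr q2 M q2' ∧ R q1' q2') ∧
      (∀ M q2', A2.tr q2 M q2' → ∃ q1', A1.tr q1 M q1' ∧ R q1' q2')

/-- A BIP architecture: a finite disconnected family of coordinating components,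
    an interface `ports` containing all their ports, and an interaction model `γ`. -/
structure Arch (N : Type) : Type 1 where
  ι : Type
  fin : Finite ι
  comp : ι → PA N
  ports : Set N
  γ : Set (Set N)
  sub : ∀ i, (comp i).nodes ⊆ ports
  disj : ∀ i j, i ≠ j → Disjoint (comp i).nodes (comp j).nodes

/-- The internal ports `P_C` of an architecture. -/
def Arch.PC {N : Type} (A : Arch N) : Set N := ⋃ i, (A.comp i).nodes

/-- Transitions of the application of the architecture `A` to the dummy component
    `D = ({q_D}, q_D, P \ P_C, {(q_D, M, q_D) | ∅ ≠ M ⊆ P \ P_C})`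
    (the dummy imposes no constraints and never changes state).
    Rule 1: `M = ∅` and exactly one coordinating component makes an `∅`-move;
    Rule 2: `M ∩ P_A = M ∈ γ` and every component sharing ports with `M`
    makes the projected move while the others stay put. -/
def appTr {N : Type} (A : Arch N) (q : ∀ i, (A.comp i).Q) (M : Set N)
    (q' : ∀ i, (A.comp i).Q) : Prop :=
  (M = ∅ ∧ ∃ i, (A.comp i).tr (q i) ∅ (q' i) ∧ ∀ j, j ≠ i → q' j = q j) ∨
  (M ⊆ A.ports ∧ M ∈ A.γ ∧ ∀ i,
    (M ∩ (A.comp i).nodes ≠ ∅ → (A.comp i).tr (q i) (M ∩ (A.comp i).nodes) (q' i)) ∧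
    (M ∩ (A.comp i).nodes = ∅ → q' i = q i))

/-- Interpretation `g_a` of a BIP architecture: the application to the dummy
    component (whose unique state is kept as a `Unit` coordinate),
    with all internal ports `P_C` hidden from the labels. -/
def ga {N : Type} (A : Arch N) : LTS (Set N) where
  Q := (∀ i, (A.comp i).Q) × Unit
  init := (fun i => (A.comp i).init, ())
  tr := fun q M' q' => ∃ M, appTr A q.1 M q'.1 ∧ M' = M \ A.PC

/-- The class Arch': coordinating components have ∅-labeled transitions
    only as self-loops. -/
def ArchPrime {N : Type} (A : Arch N) : Prop :=
  ∀ i q q', (A.comp i).tr q ∅ q' → q' = q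

/-- Translation of a port automaton into a BIP architecture, with `pr` providing
    the fresh primed duplicate of each port.  The single coordinating component is
    the automaton itself relabeled over the primed ports, and the interaction model
    is `{M ∪ M' | M ⊆ N}`. -/
def BIPa {N : Type} (A : PA N) (pr : N → N) : Arch N where
  ι := Unit
  fin := inferInstance
  comp := fun _ =>
    ⟨A.Q, A.init, pr '' A.nodes, fun q M' q' => ∃ M, M' = pr '' M ∧ A.tr q M q'⟩
  ports := A.nodes ∪ pr '' A.nodes
  γ := {M' | ∃ M, M ⊆ A.nodes ∧ M' = M ∪ pr '' M}
  sub := fun _ => Set.subset_union_right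
  disj := fun i j h => absurd (Subsingleton.elim i j) h

/-- The single-state port automaton encoding of an interaction model `γ` over ports `P`. -/
def Agamma {N : Type} (P : Set N) (γ : Set (Set N)) : PA N :=
  ⟨Unit, (), P, fun _ M _ => M ∈ γ⟩

/-- n-ary product of a family of port automata (the generalization of `paProd`):
    a global step labeled `M` projects to a step or an idling of each member. -/
def famProd {N ι : Type} (f : ι → PA N) : PA N where
  Q := ∀ i, (f i).Q
  init := fun i => (f i).init
  nodes := ⋃ i, (f i).nodes
  tr := fun q M q' => M ⊆ (⋃ i, (f i).nodes) ∧ ∀ i,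
    ((f i).tr (q i) (M ∩ (f i).nodes) (q' i) ∨ (M ∩ (f i).nodes = ∅ ∧ q' i = q i))

/-- Translation of a BIP architecture into a port automaton:
    `Reo_a(A) = ∃P_C (C̃1 ⋈ ⋯ ⋈ C̃n ⋈ A_γ)`. -/
def ReoA {N : Type} (A : Arch N) : PA N :=
  PA.hide A.PC (famProd (fun o : Option A.ι =>
    match o with
    | none => Agamma A.ports A.γ
    | some i => A.comp i))

/-- Composition `A1 ⊕ A2` of BIP architectures. -/
def archComp {N : Type} (A1 A2 : Arch N)
    (h1 : Disjoint A1.PC A2.ports) (h2 : Disjoint A2.PC A1.ports) : Arch N where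
  ι := A1.ι ⊕ A2.ι
  fin := by have := A1.fin; have := A2.fin; infer_instance
  comp := Sum.elim A1.comp A2.comp
  ports := A1.ports ∪ A2.ports
  γ := {M | M ⊆ A1.ports ∪ A2.ports ∧ M ∩ A1.ports ∈ A1.γ ∧ M ∩ A2.ports ∈ A2.γ}
  sub := by
    rintro (i | i)
    · exact (A1.sub i).trans Set.subset_union_left
    · exact (A2.sub i).trans Set.subset_union_right
  disj := by
    rintro (i | i) (j | j) hij
    · exact A1.disj i j (by rintro rfl; exact hij rfl)
    · exact h1.mono (Set.subset_iUnion (fun k => (A1.comp k).nodes) i) (A2.sub j)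
    · exact h2.mono (Set.subset_iUnion (fun k => (A2.comp k).nodes) i) (A1.sub j)
    · exact A2.disj i j (by rintro rfl; exact hij rfl)

/-! The product `R1 × R2` of the two bisimulations is a bisimulation between the products: each
kind of product step (synchronisation, or an interleaved step of either side) is matched
componentwise, and its side conditions mention only the node sets, which agree. -/

section Simulation

variable {Λ : Type}

def IsSimulation (L1 L2 : LTS Λ) (R : L1.Q → L2.Q → Prop) : Prop :=
  ∀ q1 q2, R q1 q2 → ∀ a q1', L1.tr q1 a q1' → ∃ q2', L2.tr q2 a q2' ∧ R q1' q2'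

theorem isBisim_iff_isSimulation (L1 L2 : LTS Λ) (R : L1.Q → L2.Q → Prop) :
    IsBisim L1 L2 R ↔
      R L1.init L2.init ∧ IsSimulation L1 L2 R ∧ IsSimulation L2 L1 (flip R) := by
  unfold IsBisim IsSimulation
  constructor
  · rintro ⟨hinit, hR⟩
    exact ⟨hinit, fun q1 q2 h => (hR q1 q2 h).1, fun q2 q1 h => (hR q1 q2 h).2⟩
  · rintro ⟨hinit, hfwd, hbwd⟩
    exact ⟨hinit, fun q1 q2 h => ⟨hfwd q1 q2 h, hbwd q2 q1 h⟩⟩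

end Simulation

def prodRel {α1 α2 β1 β2 : Type} (R1 : α1 → β1 → Prop) (R2 : α2 → β2 → Prop) :
    α1 × α2 → β1 × β2 → Prop :=
  fun p q => R1 p.1 q.1 ∧ R2 p.2 q.2

theorem isSimulation_paProd {N : Type} {A1 A1' A2 A2' : PA N}
    (h1n : A1.nodes = A1'.nodes) (h2n : A2.nodes = A2'.nodes)
    {R1 : A1.Q → A1'.Q → Prop} {R2 : A2.Q → A2'.Q → Prop}
    (h1 : IsSimulation (fa A1) (fa A1') R1) (h2 : IsSimulation (fa A2) (fa A2') R2) :
    IsSimulation (fa (paProd A1 A2)) (fa (paProd A1' A2')) (prodRel R1 R2) := by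
  rintro ⟨q1, q2⟩ ⟨p1, p2⟩ ⟨hr1, hr2⟩ M ⟨q1', q2'⟩ hstep
  simp only [fa, paProd, h1n, h2n] at hstep ⊢
  rcases hstep with ⟨M1, M2, t1, t2, hsync, rfl⟩ | ⟨t1, rfl, hidle⟩ | ⟨t2, rfl, hidle⟩
  · obtain ⟨p1', tp1, hr1'⟩ := h1 q1 p1 hr1 M1 q1' t1
    obtain ⟨p2', tp2, hr2'⟩ := h2 q2 p2 hr2 M2 q2' t2
    exact ⟨(p1', p2'), Or.inl ⟨M1, M2, tp1, tp2, hsync, rfl⟩, hr1', hr2'⟩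
  · obtain ⟨p1', tp1, hr1'⟩ := h1 q1 p1 hr1 M q1' t1
    exact ⟨(p1', p2), Or.inr (Or.inl ⟨tp1, rfl, hidle⟩), hr1', hr2⟩
  · obtain ⟨p2', tp2, hr2'⟩ := h2 q2 p2 hr2 M q2' t2
    exact ⟨(p1, p2'), Or.inr (Or.inr ⟨tp2, rfl, hidle⟩), hr1, hr2'⟩

/-- Bisimilarity is a congruence with respect to the product of
    port automata. -/
theorem bisim_congruence_paProd {N : Type} (A1 A1' A2 A2' : PA N)
    (h1n : A1.nodes = A1'.nodes) (h2n : A2.nodes = A2'.nodes)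
    (h1 : Bisim (fa A1) (fa A1')) (h2 : Bisim (fa A2) (fa A2')) :
    Bisim (fa (paProd A1 A2)) (fa (paProd A1' A2')) := by
  obtain ⟨R1, hR1⟩ := h1
  obtain ⟨R2, hR2⟩ := h2
  rw [isBisim_iff_isSimulation] at hR1 hR2
  obtain ⟨hinit1, hfwd1, hbwd1⟩ := hR1
  obtain ⟨hinit2, hfwd2, hbwd2⟩ := hR2
  refine ⟨prodRel R1 R2, (isBisim_iff_isSimulation _ _ _).2 ⟨⟨hinit1, hinit2⟩, ?_, ?_⟩⟩
  · exact isSimulation_paProd h1n h2n hfwd1 hfwd2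
  · -- `flip (prodRel R1 R2)` is `prodRel (flip R1) (flip R2)` by unfolding
    exact isSimulation_paProd h1n.symm h2n.symm hbwd1 hbwd2
end

section
/- Bisimilarity is preserved by hiding: if port automata A1 and A2 (with the same node set N) are bisimilar and P ⊆ N, then the hidden automata ∃P(A1) and ∃P(A2) are bisimilar. -/
def LTS.relabel {Λ Λ' : Type} (f : Λ → Λ') (L : LTS Λ) : LTS Λ' :=
  ⟨L.Q, L.init, fun q b q' => ∃ a, L.tr q a q' ∧ b = f a⟩

theorem IsBisim.relabel {Λ Λ' : Type} {L1 L2 : LTS Λ} {R : L1.Q → L2.Q → Prop}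
    (f : Λ → Λ') (hR : IsBisim L1 L2 R) : IsBisim (L1.relabel f) (L2.relabel f) R := by
  refine ⟨hR.1, fun q1 q2 hq => ⟨?_, ?_⟩⟩
  · rintro _ q1' ⟨a, htr, rfl⟩
    obtain ⟨q2', htr2, hR'⟩ := (hR.2 q1 q2 hq).1 a q1' htr
    exact ⟨q2', ⟨a, htr2, rfl⟩, hR'⟩
  · rintro _ q2' ⟨a, htr, rfl⟩
    obtain ⟨q1', htr1, hR'⟩ := (hR.2 q1 q2 hq).2 a q2' htr
    exact ⟨q1', ⟨a, htr1, rfl⟩, hR'⟩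

theorem Bisim.relabel {Λ Λ' : Type} {L1 L2 : LTS Λ} (f : Λ → Λ') (h : Bisim L1 L2) :
    Bisim (L1.relabel f) (L2.relabel f) :=
  let ⟨R, hR⟩ := h
  ⟨R, hR.relabel f⟩

theorem fa_hide {N : Type} (P : Set N) (A : PA N) :
    fa (PA.hide P A) = (fa A).relabel (· \ P) :=
  rfl

theorem bisim_preserved_by_hiding_general {N : Type} (A1 A2 : PA N) (P : Set N)
    (h : Bisim (fa A1) (fa A2)) :
    Bisim (fa (PA.hide P A1)) (fa (PA.hide P A2)) := by
  rw [fa_hide, fa_hide]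
  exact h.relabel _

/-- Bisimilarity is preserved by hiding. -/
theorem bisim_preserved_by_hiding {N : Type} (A1 A2 : PA N) (P : Set N)
    (hn : A1.nodes = A2.nodes) (hP : P ⊆ A1.nodes)
    (h : Bisim (fa A1) (fa A2)) :
    Bisim (fa (PA.hide P A1)) (fa (PA.hide P A2)) :=
  bisim_preserved_by_hiding_general A1 A2 P h
end

section
/- The port-automaton encoding of interaction models distributes over architecture composition: if A1 = (C1, P1, γ1) and A2 = (C2, P2, γ2) are BIP architectures with P_{C1} ∩ P_{C2} = ∅ and ∅ ∈ γ1 ∩ γ2, and γ12 = {M ⊆ P1 ∪ P2 | M ∩ P1 ∈ γ1 and M ∩ P2 ∈ γ2} is the interaction model of A1 ⊕ A2, then the single-state port automaton A_{γ12} over P1 ∪ P2 is bisimilar to the product A_{γ1} ⋈ A_{γ2}. -/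
theorem Bisim.of_enabled_iff {Λ : Type} {L1 L2 : LTS Λ}
    (h : ∀ q1 q2 a, (∃ q1', L1.tr q1 a q1') ↔ ∃ q2', L2.tr q2 a q2') : Bisim L1 L2 := by
  refine ⟨fun _ _ => True, trivial, fun q1 q2 _ => ⟨fun a q1' h1 => ?_, fun a q2' h2 => ?_⟩⟩
  · obtain ⟨q2', h2⟩ := (h q1 q2 a).1 ⟨q1', h1⟩
    exact ⟨q2', h2, trivial⟩
  · obtain ⟨q1', h1⟩ := (h q1 q2 a).2 ⟨q2', h2⟩
    exact ⟨q1', h1, trivial⟩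

theorem Set.union_inter_eq_left_of_inter_eq {α : Type*} {M1 M2 P1 P2 : Set α}
    (h1 : M1 ⊆ P1) (h : M1 ∩ P2 = M2 ∩ P1) : (M1 ∪ M2) ∩ P1 = M1 := by
  rw [Set.union_inter_distrib_right, Set.inter_eq_self_of_subset_left h1, ← h,
    Set.union_eq_self_of_subset_right Set.inter_subset_left]

section Agamma

variable {N : Type} {P1 P2 : Set N} {γ1 γ2 : Set (Set N)}

theorem paProd_Agamma_tr_iff_sync (he1 : ∅ ∈ γ1) (he2 : ∅ ∈ γ2)
    {q q' : Unit × Unit} {M : Set N} :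
    (paProd (Agamma P1 γ1) (Agamma P2 γ2)).tr q M q' ↔
      ∃ M1 ∈ γ1, ∃ M2 ∈ γ2, M1 ∩ P2 = M2 ∩ P1 ∧ M = M1 ∪ M2 := by
  constructor
  · rintro (⟨M1, M2, h1, h2, hsync, rfl⟩ | ⟨h1, -, hd⟩ | ⟨h2, -, hd⟩)
    · exact ⟨M1, h1, M2, h2, hsync, rfl⟩
    · exact ⟨M, h1, ∅, he2, by rw [Set.empty_inter]; exact hd, (Set.union_empty M).symm⟩
    · exact ⟨∅, he1, M, h2, by rw [Set.empty_inter]; exact hd.symm, (Set.empty_union M).symm⟩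
  · rintro ⟨M1, h1, M2, h2, hsync, rfl⟩
    exact Or.inl ⟨M1, M2, h1, h2, hsync, rfl⟩

theorem sync_iff_mem_interaction (hs1 : ∀ M ∈ γ1, M ⊆ P1) (hs2 : ∀ M ∈ γ2, M ⊆ P2)
    {M : Set N} :
    (∃ M1 ∈ γ1, ∃ M2 ∈ γ2, M1 ∩ P2 = M2 ∩ P1 ∧ M = M1 ∪ M2) ↔
      M ⊆ P1 ∪ P2 ∧ M ∩ P1 ∈ γ1 ∧ M ∩ P2 ∈ γ2 := by
  constructor
  · rintro ⟨M1, h1, M2, h2, hsync, rfl⟩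
    have hM1 : (M1 ∪ M2) ∩ P1 = M1 := Set.union_inter_eq_left_of_inter_eq (hs1 M1 h1) hsync
    have hM2 : (M1 ∪ M2) ∩ P2 = M2 := by
      rw [Set.union_comm]; exact Set.union_inter_eq_left_of_inter_eq (hs2 M2 h2) hsync.symm
    exact ⟨Set.union_subset_union (hs1 M1 h1) (hs2 M2 h2), by rwa [hM1], by rwa [hM2]⟩
  · rintro ⟨hM, h1, h2⟩
    refine ⟨M ∩ P1, h1, M ∩ P2, h2, Set.inter_right_comm M P1 P2, ?_⟩
    rw [← Set.inter_union_distrib_left, Set.inter_eq_self_of_subset_left hM]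

theorem paProd_Agamma_tr_iff (hs1 : ∀ M ∈ γ1, M ⊆ P1) (hs2 : ∀ M ∈ γ2, M ⊆ P2)
    (he1 : ∅ ∈ γ1) (he2 : ∅ ∈ γ2) {q q' : Unit × Unit} {M : Set N} :
    (paProd (Agamma P1 γ1) (Agamma P2 γ2)).tr q M q' ↔
      M ⊆ P1 ∪ P2 ∧ M ∩ P1 ∈ γ1 ∧ M ∩ P2 ∈ γ2 :=
  (paProd_Agamma_tr_iff_sync he1 he2).trans (sync_iff_mem_interaction hs1 hs2)

end Agamma

/-- the port-automaton encoding of interaction models distributes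
    over architecture composition: `A_{γ12} ∼ A_{γ1} ⋈ A_{γ2}`. -/
theorem Agamma_compose {N : Type} (P1 P2 : Set N) (γ1 γ2 : Set (Set N))
    (hs1 : ∀ M ∈ γ1, M ⊆ P1) (hs2 : ∀ M ∈ γ2, M ⊆ P2)
    (he1 : ∅ ∈ γ1) (he2 : ∅ ∈ γ2) :
    Bisim
      (fa (Agamma (P1 ∪ P2) {M | M ⊆ P1 ∪ P2 ∧ M ∩ P1 ∈ γ1 ∧ M ∩ P2 ∈ γ2}))
      (fa (paProd (Agamma P1 γ1) (Agamma P2 γ2))) := by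
  refine Bisim.of_enabled_iff fun _ _ _ => ⟨fun ⟨_, h⟩ => ⟨((), ()), ?_⟩, fun ⟨_, h⟩ => ⟨(), ?_⟩⟩
  · exact (paProd_Agamma_tr_iff hs1 hs2 he1 he2).2 h
  · exact (paProd_Agamma_tr_iff hs1 hs2 he1 he2).1 h
end

section
/- The translation from BIP architectures to port automata is a homomorphism up to semantic equivalence: for BIP architectures A1 = (C1, P1, γ1) and A2 = (C2, P2, γ2) in Arch' with P_{C1} ∩ P2 = P_{C2} ∩ P1 = ∅ (hence in particular P_{C1} ∩ P_{C2} = ∅) and ∅ ∈ γ1 ∩ γ2, the port automaton Reo_a(A1 ⊕ A2) is bisimilar to Reo_a(A1) ⋈ Reo_a(A2). -/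
/-!
Both sides are products of the same coordinating components, so the bisimulation relates
states that agree on them. Since `∅ ∈ γ`, a step of `Reo_a(A)` is exactly a step of the
components on some interaction `M ∈ γ`, with `P_C` hidden; since every `Reo_a(A)` has
`∅`-self-loops, the interleaving steps of `⋈` are synchronous steps with an idle partner.
An interaction `M ⊆ P1 ∪ P2` of `A1 ⊕ A2` then corresponds to the synchronised pair
`(M ∩ P1, M ∩ P2)`, and a synchronised pair `(M1, M2)` to `M1 ∪ M2`. Because each `P_{Ci}`
is disjoint from the other interface, hiding and the synchronisation condition on the
hidden labels commute with this correspondence.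
-/

namespace Set

variable {α : Type*} {s t u v w : Set α}

theorem union_inter_eq_left_of_inter_subset (hs : s ⊆ u) (ht : t ∩ u ⊆ s) :
    (s ∪ t) ∩ u = s := by
  rw [union_inter_distrib_right, inter_eq_self_of_subset_left hs, union_eq_left.2 ht]

theorem sdiff_inter_sdiff_eq_inter (hs : Disjoint s w) (ht : Disjoint t v) :
    (s \ t) ∩ (v \ w) = s ∩ v := by
  ext x
  simp only [mem_inter_iff, mem_sdiff]
  exact ⟨fun h => ⟨h.1.1, h.2.1⟩, fun h =>
    ⟨⟨h.1, fun hxt => disjoint_left.1 ht hxt h.2⟩, h.2, fun hxw => disjoint_left.1 hs h.1 hxw⟩⟩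

theorem union_sdiff_union_of_disjoint (hs : Disjoint s v) (ht : Disjoint t u) :
    (s ∪ t) \ (u ∪ v) = s \ u ∪ t \ v := by
  ext x
  simp only [mem_union, mem_sdiff]
  have hsv : x ∈ s → x ∉ v := fun h => disjoint_left.1 hs h
  have htu : x ∈ t → x ∉ u := fun h => disjoint_left.1 ht h
  tauto

end Set

theorem paProd_tr_iff_of_selfloops {N : Type} {A1 A2 : PA N}
    (h1 : ∀ q, A1.tr q ∅ q) (h2 : ∀ q, A2.tr q ∅ q) {q q' : A1.Q × A2.Q} {M : Set N} :
    (paProd A1 A2).tr q M q' ↔ ∃ M1 M2, A1.tr q.1 M1 q'.1 ∧ A2.tr q.2 M2 q'.2 ∧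
      M1 ∩ A2.nodes = M2 ∩ A1.nodes ∧ M = M1 ∪ M2 := by
  refine ⟨?_, Or.inl⟩
  rintro (hsync | ⟨t1, hq2, hM2⟩ | ⟨t2, hq1, hM1⟩)
  · exact hsync
  · refine ⟨M, ∅, t1, hq2 ▸ h2 q.2, by rw [hM2, Set.empty_inter], (Set.union_empty M).symm⟩
  · refine ⟨∅, M, hq1 ▸ h1 q.1, t2, by rw [hM1, Set.empty_inter], (Set.empty_union M).symm⟩

namespace Arch

variable {N : Type} (A : Arch N)

-- A `famProd` step without the factor `A_γ`, whose idling on `M = ∅` becomes the demand `M ∈ γ`.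
def Step (s : ∀ i, (A.comp i).Q) (M : Set N) (s' : ∀ i, (A.comp i).Q) : Prop :=
  M ⊆ A.ports ∧ M ∈ A.γ ∧ ∀ i,
    (A.comp i).tr (s i) (M ∩ (A.comp i).nodes) (s' i) ∨
      (M ∩ (A.comp i).nodes = ∅ ∧ s' i = s i)

def reoAState (s : ∀ i, (A.comp i).Q) : (ReoA A).Q
  | none => ()
  | some i => s i

theorem PC_subset_ports : A.PC ⊆ A.ports := Set.iUnion_subset A.sub

theorem inter_ports_inter_nodes (M : Set N) (i : A.ι) :
    M ∩ A.ports ∩ (A.comp i).nodes = M ∩ (A.comp i).nodes := by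
  rw [Set.inter_assoc, Set.inter_eq_self_of_subset_right (A.sub i)]

theorem reoA_nodes : (ReoA A).nodes = A.ports \ A.PC := by
  have : (⋃ o : Option A.ι, (match o with
      | none => Agamma A.ports A.γ
      | some i => A.comp i).nodes) = A.ports := by
    rw [Set.iUnion_option]
    exact Set.union_eq_left.2 A.PC_subset_ports
  exact congrArg (· \ A.PC) this

theorem reoA_tr_self (q : (ReoA A).Q) : (ReoA A).tr q ∅ q :=
  ⟨∅, ⟨Set.empty_subset _, fun _ => Or.inr ⟨Set.empty_inter _, rfl⟩⟩, (Set.empty_sdiff _).symm⟩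

theorem reoA_tr_iff (he : ∅ ∈ A.γ) {q q' : (ReoA A).Q} {L : Set N} :
    (ReoA A).tr q L q' ↔
      ∃ M, A.Step (fun i => q (some i)) M (fun i => q' (some i)) ∧ L = M \ A.PC := by
  constructor
  · rintro ⟨M, ⟨hMsub, hcomp⟩, rfl⟩
    rw [Set.iUnion_option] at hMsub
    have hM : M ⊆ A.ports := Set.union_eq_left.2 A.PC_subset_ports ▸ hMsub
    have hγ : M ∩ A.ports ∈ A.γ ∨ M ∩ A.ports = ∅ := (hcomp none).imp_right And.left
    rw [Set.inter_eq_self_of_subset_left hM] at hγ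
    exact ⟨M, ⟨hM, hγ.elim id (· ▸ he), fun i => hcomp (some i)⟩, rfl⟩
  · rintro ⟨M, ⟨hM, hγ, hcomp⟩, rfl⟩
    refine ⟨M, ⟨fun x hx => Set.mem_iUnion.2 ⟨none, hM hx⟩, ?_⟩, rfl⟩
    rintro (_ | i)
    · exact Or.inl (show M ∩ A.ports ∈ A.γ by rwa [Set.inter_eq_self_of_subset_left hM])
    · exact hcomp i

end Arch

theorem Arch.sdiff_PC_inter_reoA_nodes {N : Type} {A B : Arch N} (hAB : Disjoint A.PC B.ports)
    (hBA : Disjoint B.PC A.ports) {M : Set N} (hM : M ⊆ A.ports) :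
    (M \ A.PC) ∩ (ReoA B).nodes = M ∩ B.ports := by
  rw [B.reoA_nodes, Set.sdiff_inter_sdiff_eq_inter (hBA.symm.mono_left hM) hAB]

section archComp

variable {N : Type} {A1 A2 : Arch N} {h1 : Disjoint A1.PC A2.ports} {h2 : Disjoint A2.PC A1.ports}

theorem archComp_PC : (archComp A1 A2 h1 h2).PC = A1.PC ∪ A2.PC :=
  Set.iUnion_sum

theorem archComp_step_iff {s s' : ∀ k, ((archComp A1 A2 h1 h2).comp k).Q} {M : Set N} :
    (archComp A1 A2 h1 h2).Step s M s' ↔ M ⊆ A1.ports ∪ A2.ports ∧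
      A1.Step (fun i => s (.inl i)) (M ∩ A1.ports) (fun i => s' (.inl i)) ∧
      A2.Step (fun i => s (.inr i)) (M ∩ A2.ports) (fun i => s' (.inr i)) := by
  simp only [Arch.Step, archComp, Sum.forall, Sum.elim_inl, Sum.elim_inr, Set.mem_ofPred_eq,
    Arch.inter_ports_inter_nodes, Set.inter_subset_right, true_and]
  tauto

theorem archComp_empty_mem_γ (he1 : ∅ ∈ A1.γ) (he2 : ∅ ∈ A2.γ) :
    ∅ ∈ (archComp A1 A2 h1 h2).γ :=
  ⟨Set.empty_subset _, (Set.empty_inter _).symm ▸ he1, (Set.empty_inter _).symm ▸ he2⟩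

-- The `A_γ` coordinates are single states, so agreement on the components is all there is.
def ArchCompRel (q : (ReoA (archComp A1 A2 h1 h2)).Q) (p : (ReoA A1).Q × (ReoA A2).Q) : Prop :=
  (∀ i, q (some (.inl i)) = p.1 (some i)) ∧ ∀ i, q (some (.inr i)) = p.2 (some i)

theorem ArchCompRel.forward (he1 : ∅ ∈ A1.γ) (he2 : ∅ ∈ A2.γ)
    {q : (ReoA (archComp A1 A2 h1 h2)).Q} {p : (ReoA A1).Q × (ReoA A2).Q}
    (hR : ArchCompRel q p) {L : Set N} {q'} (ht : (ReoA (archComp A1 A2 h1 h2)).tr q L q') :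
    ∃ p', (paProd (ReoA A1) (ReoA A2)).tr p L p' ∧ ArchCompRel q' p' := by
  obtain ⟨M, hstep, rfl⟩ := (Arch.reoA_tr_iff _ (archComp_empty_mem_γ he1 he2)).1 ht
  obtain ⟨hM, hs1, hs2⟩ := archComp_step_iff.1 hstep
  obtain ⟨hR1, hR2⟩ := hR
  refine ⟨(A1.reoAState fun i => q' (some (.inl i)), A2.reoAState fun i => q' (some (.inr i))),
    Or.inl ⟨(M ∩ A1.ports) \ A1.PC, (M ∩ A2.ports) \ A2.PC,
      (A1.reoA_tr_iff he1).2 ⟨_, funext hR1 ▸ hs1, rfl⟩,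
      (A2.reoA_tr_iff he2).2 ⟨_, funext hR2 ▸ hs2, rfl⟩, ?_, ?_⟩, fun _ => rfl, fun _ => rfl⟩
  · rw [Arch.sdiff_PC_inter_reoA_nodes h1 h2 Set.inter_subset_right,
      Arch.sdiff_PC_inter_reoA_nodes h2 h1 Set.inter_subset_right, Set.inter_right_comm]
  · rw [archComp_PC, ← Set.union_sdiff_union_of_disjoint
      (h2.symm.mono_left Set.inter_subset_right) (h1.symm.mono_left Set.inter_subset_right),
      ← Set.inter_union_distrib_left, Set.inter_eq_self_of_subset_left hM]

theorem ArchCompRel.backward (he1 : ∅ ∈ A1.γ) (he2 : ∅ ∈ A2.γ)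
    {q : (ReoA (archComp A1 A2 h1 h2)).Q} {p : (ReoA A1).Q × (ReoA A2).Q}
    (hR : ArchCompRel q p) {L : Set N} {p'} (ht : (paProd (ReoA A1) (ReoA A2)).tr p L p') :
    ∃ q', (ReoA (archComp A1 A2 h1 h2)).tr q L q' ∧ ArchCompRel q' p' := by
  obtain ⟨L1, L2, t1, t2, hsync, rfl⟩ :=
    (paProd_tr_iff_of_selfloops A1.reoA_tr_self A2.reoA_tr_self).1 ht
  obtain ⟨M1, hs1, rfl⟩ := (A1.reoA_tr_iff he1).1 t1
  obtain ⟨M2, hs2, rfl⟩ := (A2.reoA_tr_iff he2).1 t2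
  rw [Arch.sdiff_PC_inter_reoA_nodes h1 h2 hs1.1, Arch.sdiff_PC_inter_reoA_nodes h2 h1 hs2.1]
    at hsync
  have hM1 : (M1 ∪ M2) ∩ A1.ports = M1 :=
    Set.union_inter_eq_left_of_inter_subset hs1.1 (hsync ▸ Set.inter_subset_left)
  have hM2 : (M1 ∪ M2) ∩ A2.ports = M2 := by
    rw [Set.union_comm]
    exact Set.union_inter_eq_left_of_inter_subset hs2.1 (hsync.symm ▸ Set.inter_subset_left)
  obtain ⟨hR1, hR2⟩ := hR
  refine ⟨(archComp A1 A2 h1 h2).reoAState fun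
      | .inl i => p'.1 (some i)
      | .inr i => p'.2 (some i),
    (Arch.reoA_tr_iff _ (archComp_empty_mem_γ he1 he2)).2 ⟨M1 ∪ M2, ?_, ?_⟩,
    fun _ => rfl, fun _ => rfl⟩
  · refine archComp_step_iff.2 ⟨Set.union_subset_union hs1.1 hs2.1, ?_, ?_⟩
    · rw [hM1]; exact (funext hR1).symm ▸ hs1
    · rw [hM2]; exact (funext hR2).symm ▸ hs2
  · rw [archComp_PC, Set.union_sdiff_union_of_disjoint (h2.symm.mono_left hs1.1)
      (h1.symm.mono_left hs2.1)]

end archComp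

theorem ReoA_homomorphism_general {N : Type} (A1 A2 : Arch N)
    (h1 : Disjoint A1.PC A2.ports) (h2 : Disjoint A2.PC A1.ports)
    (he1 : ∅ ∈ A1.γ) (he2 : ∅ ∈ A2.γ) :
    Bisim (fa (ReoA (archComp A1 A2 h1 h2)))
      (fa (paProd (ReoA A1) (ReoA A2))) :=
  ⟨ArchCompRel, ⟨fun _ => rfl, fun _ => rfl⟩, fun _ _ hR =>
    ⟨fun _ _ => ArchCompRel.forward he1 he2 hR, fun _ _ => ArchCompRel.backward he1 he2 hR⟩⟩

/-- `Reo_a` is a homomorphism up to semantic equivalence: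
    `Reo_a(A1 ⊕ A2) ∼ Reo_a(A1) ⋈ Reo_a(A2)`. -/
theorem ReoA_homomorphism {N : Type} (A1 A2 : Arch N)
    (hA1 : ArchPrime A1) (hA2 : ArchPrime A2)
    (h1 : Disjoint A1.PC A2.ports) (h2 : Disjoint A2.PC A1.ports)
    (he1 : ∅ ∈ A1.γ) (he2 : ∅ ∈ A2.γ) :
    Bisim (fa (ReoA (archComp A1 A2 h1 h2)))
      (fa (paProd (ReoA A1) (ReoA A2))) :=
  ReoA_homomorphism_general A1 A2 h1 h2 he1 he2
end

section
/- The data-sensitive interpretations commute with the translation from stateless constraint automata to BIP interaction models: for every stateless constraint automaton with polarity A ∈ CA±, g_b(BIP_b(A)) = f_b(A), i.e., the LTS interpretation of the extracted interaction model equals the LTS interpretation of the automaton. The key lemma is that for every transition label (N, g) of A, the set of data assignments Δ(α(N,g)) defined by the generated interaction expression equals the set Δ(N, g) of data assignments δ : 2P → D+1 with δ(2P \ N) = {0} and δ ⊨ g. -/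
/-- Data assignments on the duplicated port set `2P = {p*, p_*}`:
    `(p, true)` is the source node `p*`, `(p, false)` the sink node `p_*`;
    `none` models the absence of data (the element `0 ∈ 1`). -/
abbrev DAssign (P D : Type) := (P × Bool) → Option D

/-- The upward part `δ_up` of a data assignment: `δ_up(p) = δ(p*)`. -/
def dup {P D : Type} (δ : DAssign P D) : P → Option D := fun p => δ (p, true)

/-- The downward part `δ_dn` of a data assignment: `δ_dn(p) = δ(p_*)`. -/
def ddn {P D : Type} (δ : DAssign P D) : P → Option D := fun p => δ (p, false)

/-- A stateless constraint automaton with polarity over bidirectional ports `P`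
    and data domain `D` (mixed nodes already hidden): a set of transitions
    `(N, g)` with `N ⊆ 2P` a synchronization constraint and `g` a data
    constraint, represented semantically as a predicate on data assignments. -/
structure SCA (P D : Type) where
  tr : Set ((Set (P × Bool)) × (DAssign P D → Prop))

/-- `Δ(N, g)`: the data assignments vanishing outside `N` that satisfy `g`. -/
def Dca {P D : Type} (N : Set (P × Bool)) (g : DAssign P D → Prop) :
    Set (DAssign P D) :=
  {δ | (∀ x, x ∉ N → δ x = none) ∧ g δ}

/-- The interpretation `f_b` of a stateless constraint automaton with polarity:
    the single-state LTS whose self-loops are labeled by the satisfying data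
    assignments of its transitions. -/
def fb {P D : Type} (A : SCA P D) : LTS (DAssign P D) :=
  ⟨Unit, (), fun _ δ _ => ∃ t ∈ A.tr, δ ∈ Dca t.1 t.2⟩

/-- A simple BIP connector `α = ({w} ← A).[g : (x_w, X_L) := up(X_A) // X_A := dn(x_w, X_L)]`:
    bottom ports `bot`, local-variable valuations `L`, a guard on the upward
    values, upward transfers `upw` (to the top port) and `upl` (to the locals),
    and a (possibly nondeterministic) downward transfer relation `dn`. -/
structure SConn (P D : Type) where
  bot : Set P
  L : Type
  guard : (P → Option D) → Prop
  upw : (P → Option D) → D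
  upl : (P → Option D) → L
  dn : D → L → (P → Option D) → Prop

/-- `Δ(α)`: the data assignments vanishing outside `2P_α` whose upward part
    satisfies the guard and whose downward part is a downward transfer of the
    upward transfers of the upward part. -/
def Dim {P D : Type} (α : SConn P D) : Set (DAssign P D) :=
  {δ | (∀ x : P × Bool, x.1 ∉ α.bot → δ x = none) ∧ α.guard (dup δ) ∧
    α.dn (α.upw (dup δ)) (α.upl (dup δ)) (ddn δ)}

/-- The interpretation `g_b` of a BIP interaction model: the single-state LTS
    whose self-loops are labeled by the data assignments allowed by its
    interaction expressions. -/
def gb {P D : Type} (Γ : Set (SConn P D)) : LTS (DAssign P D) :=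
  ⟨Unit, (), fun _ δ _ => ∃ α ∈ Γ, δ ∈ Dim α⟩

/-- Recombine an upward and a downward part into a data assignment. -/
def mk2 {P D : Type} (u d : P → Option D) : DAssign P D :=
  fun x => if x.2 then u x.1 else d x.1

/-- The simple BIP connector `α(N, g)` generated from a transition `(N, g)`:
    bottom ports `P_N`, guard `g_src ≡ ∃ sinks. g`, locals storing the upward
    values, and the relational (`solve`-style) downward transfer picking any
    sink values satisfying `g`. -/
def connOf {P D : Type} [Inhabited D] (N : Set (P × Bool))
    (g : DAssign P D → Prop) : SConn P D where
  bot := {p | (p, true) ∈ N ∨ (p, false) ∈ N}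
  L := P → Option D
  guard := fun u => ∃ d, (∀ x, x ∉ N → mk2 u d x = none) ∧ g (mk2 u d)
  upw := fun _ => default
  upl := fun u => u
  dn := fun _ u d => (∀ x, x ∉ N → mk2 u d x = none) ∧ g (mk2 u d)

/-- The translation `BIP_b`: one simple BIP connector per transition. -/
def BIPb {P D : Type} [Inhabited D] (A : SCA P D) : Set (SConn P D) :=
  {c | ∃ t ∈ A.tr, c = connOf t.1 t.2}

/-- The synchronization constraint `N(α)` of the transition generated from `α`. -/
def Nof {P D : Type} (α : SConn P D) : Set (P × Bool) := {x | x.1 ∈ α.bot}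

/-- The data constraint `g(α)` of the transition generated from `α`:
    the guard holds of the upward values and the downward values are a downward
    transfer of the upward transfers. -/
def gof {P D : Type} (α : SConn P D) : DAssign P D → Prop :=
  fun δ => α.guard (dup δ) ∧ α.dn (α.upw (dup δ)) (α.upl (dup δ)) (ddn δ)

/-- The translation `Reo_b`: the single-state constraint automaton with one
    transition `(N(α), g(α))` per simple BIP connector `α ∈ Γ`. -/
def Reob {P D : Type} (Γ : Set (SConn P D)) : SCA P D :=
  ⟨{t | ∃ α ∈ Γ, t = (Nof α, gof α)}⟩

@[simp]
lemma mk2_dup_ddn {P D : Type} (δ : DAssign P D) : mk2 (dup δ) (ddn δ) = δ := by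
  funext ⟨p, b⟩
  cases b <;> rfl

lemma subset_Nof_connOf {P D : Type} [Inhabited D] (N : Set (P × Bool))
    (g : DAssign P D → Prop) : N ⊆ Nof (connOf N g) := by
  rintro ⟨p, (_ | _)⟩ hx
  exacts [Or.inr hx, Or.inl hx]

/-- The downward transfer of `α(N, g)` alone already cuts out `Δ(N, g)`; the guard is then
witnessed by the sink values, and vanishing outside `N` implies vanishing outside `P_N`. -/
lemma Dim_connOf {P D : Type} [Inhabited D] (N : Set (P × Bool))
    (g : DAssign P D → Prop) : Dim (connOf N g) = Dca N g := by
  ext δ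
  constructor
  · rintro ⟨-, -, hdn⟩
    simp only [connOf, mk2_dup_ddn] at hdn
    exact hdn
  · rintro ⟨hvan, hg⟩
    have hdn : (∀ x, x ∉ N → mk2 (dup δ) (ddn δ) x = none) ∧ g (mk2 (dup δ) (ddn δ)) := by
      rw [mk2_dup_ddn]
      exact ⟨hvan, hg⟩
    have hbot (x : P × Bool) (hx : x.1 ∉ (connOf N g).bot) : δ x = none :=
      hvan x fun hN => hx (subset_Nof_connOf N g hN)
    exact ⟨hbot, ⟨ddn δ, hdn⟩, hdn⟩

/-- the data-sensitive interpretations commute with the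
    translation from stateless constraint automata to BIP interaction models:
    `Δ(α(N,g)) = Δ(N,g)` for every transition label, and
    `g_b(BIP_b(A)) = f_b(A)`. -/
theorem gb_BIPb_eq_fb {P D : Type} [Inhabited D] (A : SCA P D) :
    (∀ t ∈ A.tr, Dim (connOf t.1 t.2) = Dca t.1 t.2) ∧
      gb (BIPb A) = fb A := by
  refine ⟨fun t _ => Dim_connOf t.1 t.2, ?_⟩
  simp only [gb, fb, BIPb]
  congr
  funext _ δ _
  simp [Dim_connOf]
end

section
/- Hiding all ports of the empty interaction trivializes idle transitions: for any BIP architecture A ∈ Arch' whose interaction model contains ∅, the interpretation g_a(A) has an ∅-labeled self-loop at every reachable state, and every ∅-labeled transition in g_a(A) is a self-loop. -/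
/-- Reachability in an LTS. -/
def LTSReach {Λ : Type} (L : LTS Λ) (q : L.Q) : Prop :=
  Relation.ReflTransGen (fun a b => ∃ l, L.tr a l b) L.init q

section EmptyInteraction

variable {N : Type} {A : Arch N}

theorem appTr_empty_self (he : (∅ : Set N) ∈ A.γ) (v : ∀ i, (A.comp i).Q) :
    appTr A v ∅ v :=
  Or.inr ⟨Set.empty_subset _, he, fun _ => ⟨fun h => absurd (Set.empty_inter _) h, fun _ => rfl⟩⟩

theorem ga_tr_empty_self (he : (∅ : Set N) ∈ A.γ) (q : (ga A).Q) : (ga A).tr q ∅ q :=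
  ⟨∅, appTr_empty_self he q.1, (Set.empty_sdiff _).symm⟩

theorem eq_of_appTr_empty (hA : ArchPrime A) {v v' : ∀ i, (A.comp i).Q}
    (h : appTr A v ∅ v') : v' = v := by
  rcases h with ⟨-, i, hmove, hstay⟩ | ⟨-, -, hproj⟩
  · funext j
    by_cases hji : j = i
    · subst hji
      exact hA j _ _ hmove
    · exact hstay j hji
  · funext j
    exact (hproj j).2 (Set.empty_inter _)

end EmptyInteraction

/-- for `A ∈ Arch'` with `∅ ∈ γ`, the interpretation `g_a(A)` has
    an `∅`-labeled self-loop at every reachable state, and every `∅`-labeled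
    transition whose underlying interaction is `∅` is a self-loop. -/
theorem empty_interaction_trivializes {N : Type} (A : Arch N)
    (hA : ArchPrime A) (he : (∅ : Set N) ∈ A.γ) :
    (∀ q, LTSReach (ga A) q → (ga A).tr q ∅ q) ∧
      (∀ v v', appTr A v (∅ : Set N) v' → v' = v) :=
  ⟨fun q _ => ga_tr_empty_self he q, fun _ _ => eq_of_appTr_empty hA⟩
end
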